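/- Let Γ be the weighted tree of exceptional curves on a blowup Z of P² at infinity (weights = self-intersection numbers), with distinguished vertex E = π^{-1}(∞), and write π*(∞) = E + Σ_{P≠E} u_P·P with u_P ∈ ℕ. Then for every vertex P ≠ E, u_P² = d_P + d'_P, where d_P is the determinant of Γ with P removed and d'_P is the determinant of Γ with both E and P removed. -/
import Mathlib


open Classical Finset

/-- The matrix `Q(Γ)` of a weighted graph: `-a i` on the diagonal, `-1` for
adjacent vertices, `0` otherwise. -/
noncomputable def wMatrix {V : Type*} [Fintype V] (G : SimpleGraph V) (a : V → ℤ) :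
    Matrix V V ℤ :=
  Matrix.of fun i j => if i = j then -a i else if G.Adj i j then (-1 : ℤ) else 0

/-- The determinant `d(Γ)` of a weighted graph. -/
noncomputable def wDet {V : Type*} [Fintype V] (G : SimpleGraph V) (a : V → ℤ) : ℤ :=
  (wMatrix G a).det

/-- The determinant of the weighted graph obtained by deleting a set `s` of
vertices (and all incident edges). -/
noncomputable def wDetDel {V : Type*} [Fintype V] (G : SimpleGraph V) (a : V → ℤ)
    (s : Set V) : ℤ :=
  wDet (SimpleGraph.comap (Subtype.val : {v // v ∉ s} → V) G) (fun v => a v.1)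

lemma wDetDel_eq_det_submatrix {V : Type*} [Fintype V] (G : SimpleGraph V) (a : V → ℤ)
    (s : Set V) :
    wDetDel G a s =
      ((wMatrix G a).submatrix (Subtype.val : {v // v ∉ s} → V) Subtype.val).det := by
  unfold wDetDel wDet
  congr 1
  ext i j
  simp [wMatrix, Subtype.ext_iff]

open Matrix in

lemma jacobi_block {V : Type*} [Fintype V] [DecidableEq V] (A : Matrix V V ℤ)
    {k : ℕ} (s : Set V) (g : Fin k → V) (hg : Function.Injective g)
    (hs : ∀ v, v ∈ s ↔ ∃ i, g i = v) :
    A.det * (Matrix.of fun p q : Fin k => A.adjugate (g p) (g q)).det =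
      (A.submatrix (Subtype.val : {v // v ∉ s} → V) Subtype.val).det * A.det ^ k := by
  classical
  set W := {v // v ∉ s}
  let f : W ⊕ Fin k → V := Sum.elim Subtype.val g
  have hf : Function.Bijective f := by
    constructor
    · rintro (⟨x, hx⟩ | p) (⟨y, hy⟩ | q) h
      · exact congrArg Sum.inl (Subtype.ext (by simpa [f] using h))
      · exact absurd ((hs _).2 ⟨q, h.symm⟩) hx
      · exact absurd ((hs _).2 ⟨p, h⟩) hy
      · simp only [f, Sum.elim_inr] at h
        exact congrArg Sum.inr (hg h)
    · intro v
      by_cases hv : v ∈ s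
      · obtain ⟨i, hi⟩ := (hs v).1 hv
        exact ⟨Sum.inr i, hi⟩
      · exact ⟨Sum.inl ⟨v, hv⟩, rfl⟩
  let e : W ⊕ Fin k ≃ V := Equiv.ofBijective f hf
  let B : Matrix (W ⊕ Fin k) (W ⊕ Fin k) ℤ :=
    fromBlocks 1 (Matrix.of fun (i : W) q => A.adjugate i.1 (g q)) 0
      (Matrix.of fun p q => A.adjugate (g p) (g q))
  have hAC : ∀ i j, (∑ v, A i v * A.adjugate v j) = if i = j then A.det else 0 := by
    intro i j
    have := congrFun (congrFun (Matrix.mul_adjugate A) i) j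
    simpa [Matrix.mul_apply, Matrix.one_apply, mul_ite, mul_zero, mul_one] using this
  have hsum : ∀ (x j : V),
      (∑ y : W ⊕ Fin k, A x (f y) * A.adjugate (f y) j) = if x = j then A.det else 0 := by
    intro x j
    have h2 := Equiv.sum_comp e (fun v => A x v * A.adjugate v j)
    simp only [e, Equiv.ofBijective_apply] at h2
    rw [h2]
    exact hAC x j
  have hmul : A.submatrix e e * B =
      fromBlocks (A.submatrix Subtype.val Subtype.val) 0
        (Matrix.of fun p (j : W) => A (g p) j.1) (Matrix.of fun p q : Fin k =>
          if p = q then A.det else 0) := by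
    ext i j
    rcases i with i | p <;> rcases j with j | q
    · simp [Matrix.mul_apply, Fintype.sum_sum_type, B, e, f, Matrix.one_apply,
        mul_ite, Subtype.ext_iff, Finset.sum_ite_eq' Finset.univ j]
    · have h1 := hsum i.1 (g q)
      simp only [Fintype.sum_sum_type, f, Sum.elim_inl, Sum.elim_inr] at h1
      have hne : (i.1 : V) ≠ g q := fun h => i.2 ((hs _).2 ⟨q, h.symm⟩)
      simp [Matrix.mul_apply, Fintype.sum_sum_type, B, e, f, h1, hne]
    · simp [Matrix.mul_apply, Fintype.sum_sum_type, B, e, f, Matrix.one_apply,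
        mul_ite, Subtype.ext_iff, Finset.sum_ite_eq' Finset.univ j]
    · have h1 := hsum (g p) (g q)
      simp only [Fintype.sum_sum_type, f, Sum.elim_inl, Sum.elim_inr] at h1
      simp [Matrix.mul_apply, Fintype.sum_sum_type, B, e, f, h1, hg.eq_iff]
  have hdetAB := congrArg Matrix.det hmul
  rw [Matrix.det_mul, Matrix.det_submatrix_equiv_self, Matrix.det_fromBlocks_zero₁₂] at hdetAB
  have hdetB : B.det = (Matrix.of fun p q : Fin k => A.adjugate (g p) (g q)).det := by
    rw [Matrix.det_fromBlocks_zero₂₁, Matrix.det_one, one_mul]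
  have hsm : (Matrix.of fun p q : Fin k => if p = q then A.det else 0).det = A.det ^ k := by
    have : (Matrix.of fun p q : Fin k => if p = q then A.det else 0)
        = A.det • (1 : Matrix (Fin k) (Fin k) ℤ) := by
      ext p q
      simp [Matrix.one_apply, mul_ite]
    rw [this, Matrix.det_smul, Matrix.det_one, mul_one, Fintype.card_fin]
  rw [hdetB, hsm] at hdetAB
  exact hdetAB

open Matrix in
theorem exc_tree_multiplicity_sq' {V : Type*} [Fintype V]
    (G : SimpleGraph V) (a : V → ℤ)
    (hdet : wDet G a = -1)
    (E : V) (u : V → ℤ) (huE : u E = 1)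
    (hu : ∀ P : V,
      (∑ Q, (if P = Q then a P else if G.Adj P Q then 1 else 0) * u Q) =
        if P = E then 1 else 0)
    (P : V) (hP : P ≠ E) :
    (u P) ^ 2 = wDetDel G a {P} + wDetDel G a {E, P} := by
  classical
  set M := wMatrix G a with hM
  set C := M.adjugate with hC
  have hdM : M.det = -1 := hdet
  -- M.mulVec u = - indicator of E
  have hMu : M.mulVec u = fun Q => -(if Q = E then 1 else 0) := by
    funext Q
    have h1 : ∀ R, M Q R * u R
        = -((if Q = R then a Q else if G.Adj Q R then 1 else 0) * u R) := by
      intro R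
      simp only [M, wMatrix, Matrix.of_apply]
      split_ifs <;> ring
    calc M.mulVec u Q = ∑ R, M Q R * u R := rfl
      _ = ∑ R, -((if Q = R then a Q else if G.Adj Q R then 1 else 0) * u R) :=
          Finset.sum_congr rfl fun R _ => h1 R
      _ = -∑ R, (if Q = R then a Q else if G.Adj Q R then 1 else 0) * u R := by
          rw [Finset.sum_neg_distrib]
      _ = -(if Q = E then 1 else 0) := by rw [hu Q]
  -- u Q = C Q E
  have hCu : ∀ Q, u Q = C Q E := by
    intro Q
    have h1 : C.mulVec (M.mulVec u) = M.det • u := by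
      rw [Matrix.mulVec_mulVec, hC, Matrix.adjugate_mul, Matrix.smul_mulVec,
        Matrix.one_mulVec]
    have h2 : C.mulVec (M.mulVec u) Q = -C Q E := by
      rw [hMu]
      simp [Matrix.mulVec, dotProduct, mul_ite, Finset.sum_ite_eq' Finset.univ E]
    have h3 := congrFun h1 Q
    rw [h2] at h3
    have : -C Q E = -u Q := by
      rw [h3, hdM]
      simp
    linarith
  -- symmetry of adjugate
  have hMsym : Mᵀ = M := by
    ext i j
    by_cases h : i = j
    · subst h; simp
    · simp only [Matrix.transpose_apply, M, wMatrix, Matrix.of_apply, if_neg h,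
        if_neg (Ne.symm h), G.adj_comm]
  have hCsym : C E P = C P E := by
    calc C E P = Cᵀ P E := rfl
      _ = Mᵀ.adjugate P E := by rw [hC, Matrix.adjugate_transpose]
      _ = C P E := by rw [hMsym]
  -- Jacobi with k = 1
  have hj1 := jacobi_block M ({P} : Set V) (fun _ : Fin 1 => P)
    (fun i j _ => Subsingleton.elim i j) (by simp [eq_comm])
  have hd1 : (Matrix.of fun p q : Fin 1 => C ((fun _ => P) p) ((fun _ => P) q)).det
      = C P P := by
    rw [Matrix.det_fin_one]; rfl
  rw [hd1, hdM, pow_one] at hj1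
  -- Jacobi with k = 2
  have hg2 : Function.Injective ![E, P] := by
    intro i j h
    fin_cases i <;> fin_cases j <;> simp_all <;>
      first | rfl | exact absurd h.symm hP | exact absurd h hP
  have hs2 : ∀ v, v ∈ ({E, P} : Set V) ↔ ∃ i : Fin 2, ![E, P] i = v := by
    intro v
    constructor
    · rintro (rfl | rfl)
      · exact ⟨0, rfl⟩
      · exact ⟨1, rfl⟩
    · rintro ⟨i, rfl⟩
      fin_cases i
      · exact Set.mem_insert _ _
      · exact Set.mem_insert_iff.2 (Or.inr rfl)
  have hj2 := jacobi_block M ({E, P} : Set V) ![E, P] hg2 hs2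
  have hd2 : (Matrix.of fun p q : Fin 2 => C (![E, P] p) (![E, P] q)).det
      = C E E * C P P - C E P * C P E := by
    rw [Matrix.det_fin_two]
    simp
  rw [hd2, hdM] at hj2
  have hCEE : C E E = 1 := by rw [← hCu E, huE]
  have hCPE : C P E = u P := (hCu P).symm
  have hCEP : C E P = u P := by rw [hCsym, hCPE]
  rw [hCEE, hCPE, hCEP] at hj2
  rw [wDetDel_eq_det_submatrix, wDetDel_eq_det_submatrix, ← hM]
  norm_num at hj1 hj2
  nlinarith [hj1, hj2]

/-- Lemma 5.8: let `Γ` be the weighted tree of exceptional curves of a blowup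
of `P²` at infinity (weights are the self-intersection numbers, so the Gram
determinant is `-1`), with distinguished vertex `E = π⁻¹(∞)`, and let `u` give
the coefficients of the total transform `π*(∞) = E + Σ u_P·P`, characterized by
`π*(∞)·E = 1` and `π*(∞)·P = 0` for `P ≠ E`. Then `u_P² = d_P + d'_P`, where
`d_P` (resp. `d'_P`) is the determinant of `Γ` with `P` (resp. both `E` and
`P`) removed. -/
theorem exc_tree_multiplicity_sq {V : Type*} [Fintype V]
    (G : SimpleGraph V) (hG : G.IsTree) (a : V → ℤ)
    (hdet : wDet G a = -1)
    (E : V) (u : V → ℤ) (huE : u E = 1) (hunat : ∀ P, 0 ≤ u P)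
    (hu : ∀ P : V,
      (∑ Q, (if P = Q then a P else if G.Adj P Q then 1 else 0) * u Q) =
        if P = E then 1 else 0)
    (P : V) (hP : P ≠ E) :
    (u P) ^ 2 = wDetDel G a {P} + wDetDel G a {E, P} :=
  exc_tree_multiplicity_sq' G a hdet E u huE hu P hP
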